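/- Let f_1, …, f_P : ℝ^D → ℝ be nonnegative and integrable with finite second moments, number densities n_p > 0, mean velocities v̄_p and temperatures T_p > 0 (with masses m_p > 0), and let ν_{p,q} > 0 be given rates. Define, for each pair p, q, the mixture velocity v̄_{p,q} = (ρ_p ν_{p,q} v̄_p + ρ_q ν_{q,p} v̄_q)/(ρ_p ν_{p,q} + ρ_q ν_{q,p}) (with ρ_p = m_p n_p) and the mixture temperature T_{p,q} = (n_p ν_{p,q} T_p + n_q ν_{q,p} T_q)/(n_p ν_{p,q} + n_q ν_{q,p}) + (ρ_p ν_{p,q}(|v̄_p|² − |v̄_{p,q}|²) + ρ_q ν_{q,p}(|v̄_q|² − |v̄_{q,p}|²))/(D(n_p ν_{p,q} + n_q ν_{q,p})), and assume T_{p,q} > 0 for all p, q. Let M_{p,q} be the Maxwellian with mass m_p, density n_p, mean v̄_{p,q}, temperature T_{p,q}, and Q^BGK_p = ∑_{q=1}^P ν_{p,q}(M_{p,q} − f_p). Then the multispecies BGK model conserves total momentum and total kinetic energy: ∑_{p=1}^P ∫ m_p v · Q^BGK_p(v) dv = 0 and ∑_{p=1}^P ∫ (m_p/2)|v|² Q^BGK_p(v)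 dv = 0. -/

import Mathlib

open MeasureTheory

/-- The Maxwellian distribution with number density `n`, mean velocity `vb`,
temperature `T` and particle mass `m` on `ℝ^D`. -/
noncomputable def maxwellian (D : ℕ) (m n T : ℝ) (vb : EuclideanSpace ℝ (Fin D))
    (v : EuclideanSpace ℝ (Fin D)) : ℝ :=
  n * (m / (2 * Real.pi * T)) ^ ((D : ℝ) / 2) * Real.exp (-(m * ‖v - vb‖ ^ 2) / (2 * T))


open Real

lemma int_sq_gauss {a : ℝ} (ha : 0 < a) : Integrable fun x : ℝ => x ^ 2 * Real.exp (-a * x ^ 2) := by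
  have h := integrable_rpow_mul_exp_neg_mul_sq ha (s := 2) (by norm_num)
  have : ∀ x : ℝ, x ^ (2:ℝ) = x ^ 2 := fun x => by
    rw [show (2:ℝ) = ((2:ℕ):ℝ) by norm_num, Real.rpow_natCast]
  simpa only [this] using h

lemma gauss1d {a : ℝ} (ha : 0 < a) :
    ∫ x : ℝ, x ^ 2 * Real.exp (-a * x ^ 2) = Real.sqrt (π / a) / (2 * a) := by
  have hderiv : ∀ x : ℝ, HasDerivAt (fun x : ℝ => x * Real.exp (-a * x ^ 2))
      (Real.exp (-a * x ^ 2) - 2 * a * (x ^ 2 * Real.exp (-a * x ^ 2))) x := by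
    intro x
    have h1 : HasDerivAt (fun x : ℝ => -a * x ^ 2) (-a * (2 * x)) x := by
      simpa using ((hasDerivAt_pow 2 x).const_mul (-a))
    have := (hasDerivAt_id x).mul h1.exp
    simp only [Pi.mul_def, id] at this
    exact this.congr_deriv (by ring)
  have hint : Integrable fun x : ℝ =>
      Real.exp (-a * x ^ 2) - 2 * a * (x ^ 2 * Real.exp (-a * x ^ 2)) :=
    (integrable_exp_neg_mul_sq ha).sub ((int_sq_gauss ha).const_mul _)
  have h0 := integral_eq_zero_of_hasDerivAt_of_integrable hderiv hint
    (integrable_mul_exp_neg_mul_sq ha)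
  rw [integral_sub (integrable_exp_neg_mul_sq ha) ((int_sq_gauss ha).const_mul _),
    integral_const_mul, integral_gaussian, sub_eq_zero] at h0
  field_simp at h0 ⊢
  linarith

variable {D : ℕ}

lemma norm_sq_eq (v : EuclideanSpace ℝ (Fin D)) : ‖v‖ ^ 2 = ∑ i, v i ^ 2 := by
  rw [EuclideanSpace.norm_eq, Real.sq_sqrt (by positivity)]
  simp [sq_abs]

lemma transfer (g : (Fin D → ℝ) → ℝ) :
    (∫ v : EuclideanSpace ℝ (Fin D), g ((MeasurableEquiv.toLp 2 (Fin D → ℝ)).symm v))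
      = ∫ x : Fin D → ℝ, g x :=
  (EuclideanSpace.volume_preserving_symm_measurableEquiv_toLp (Fin D)).integral_comp
    (MeasurableEquiv.measurableEmbedding _) g

lemma exp_prod {a : ℝ} (v : EuclideanSpace ℝ (Fin D)) :
    Real.exp (-(a * ‖v‖ ^ 2)) = ∏ i, Real.exp (-a * v i ^ 2) := by
  rw [← Real.exp_sum]
  congr 1
  rw [norm_sq_eq, Finset.mul_sum]
  simp only [neg_mul, Finset.sum_neg_distrib]

lemma gaussE0_int {a : ℝ} (ha : 0 < a) :
    Integrable (fun v : EuclideanSpace ℝ (Fin D) => Real.exp (-(a * ‖v‖ ^ 2))) := by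
  have h : Integrable (fun x : Fin D → ℝ => ∏ i, Real.exp (-a * x i ^ 2)) :=
    Integrable.fintype_prod (f := fun _ t => Real.exp (-a * t ^ 2))
      (fun _ => integrable_exp_neg_mul_sq ha)
  have := ((EuclideanSpace.volume_preserving_symm_measurableEquiv_toLp (Fin D)).integrable_comp_emb
    (MeasurableEquiv.measurableEmbedding _)).2 h
  exact this.congr (Filter.Eventually.of_forall fun v => (exp_prod v).symm)

lemma gaussE0 {a : ℝ} (ha : 0 < a) :
    (∫ v : EuclideanSpace ℝ (Fin D), Real.exp (-(a * ‖v‖ ^ 2)))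
      = (π / a) ^ ((D : ℝ) / 2) := by
  have := GaussianFourier.integral_rexp_neg_mul_sq_norm (V := EuclideanSpace ℝ (Fin D)) ha
  simpa [finrank_euclideanSpace_fin, neg_mul] using this

noncomputable def gfun (a : ℝ) (j : Fin D) : Fin D → ℝ → ℝ := fun i t =>
  if i = j then t ^ 2 * Real.exp (-a * t ^ 2) else Real.exp (-a * t ^ 2)

lemma pi_term_int {a : ℝ} (ha : 0 < a) (j : Fin D) :
    Integrable (fun x : Fin D → ℝ => ∏ i, gfun a j i (x i)) := by
  apply Integrable.fintype_prod (f := gfun a j)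
  intro i
  by_cases h : i = j
  · have he : gfun a j i = fun t => t ^ 2 * Real.exp (-a * t ^ 2) := by
      funext t; simp [gfun, h]
    rw [he]; exact int_sq_gauss ha
  · have he : gfun a j i = fun t => Real.exp (-a * t ^ 2) := by
      funext t; simp [gfun, h]
    rw [he]; exact integrable_exp_neg_mul_sq ha

lemma pi_fun_eq {a : ℝ} (x : Fin D → ℝ) (j : Fin D) :
    (x j) ^ 2 * ∏ i, Real.exp (-a * x i ^ 2) = ∏ i, gfun a j i (x i) := by
  rw [Finset.prod_eq_mul_prod_sdiff_singleton_of_mem (Finset.mem_univ j)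
    (fun i => Real.exp (-a * x i ^ 2)),
    Finset.prod_eq_mul_prod_sdiff_singleton_of_mem (Finset.mem_univ j) (fun i => gfun a j i (x i))]
  have h1 : gfun a j j (x j) = (x j) ^ 2 * Real.exp (-a * x j ^ 2) := by simp [gfun]
  have h2 : ∀ i ∈ Finset.univ \ {j}, gfun a j i (x i) = Real.exp (-a * x i ^ 2) := by
    intro i hi
    simp only [Finset.mem_sdiff, Finset.mem_singleton] at hi
    simp [gfun, hi.2]
  rw [h1, Finset.prod_congr rfl h2]
  ring

lemma pointwise_sq {a : ℝ} (v : EuclideanSpace ℝ (Fin D)) :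
    ‖v‖ ^ 2 * Real.exp (-(a * ‖v‖ ^ 2)) = ∑ j, ∏ i, gfun a j i (v i) := by
  rw [exp_prod, norm_sq_eq, Finset.sum_mul]
  exact Finset.sum_congr rfl fun j _ => pi_fun_eq (fun i => v i) j

lemma gaussE2_int {a : ℝ} (ha : 0 < a) :
    Integrable (fun v : EuclideanSpace ℝ (Fin D) => ‖v‖ ^ 2 * Real.exp (-(a * ‖v‖ ^ 2))) := by
  have h : Integrable (fun x : Fin D → ℝ => ∑ j, ∏ i, gfun a j i (x i)) :=
    integrable_finset_sum _ (fun j _ => pi_term_int ha j)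
  have := ((EuclideanSpace.volume_preserving_symm_measurableEquiv_toLp (Fin D)).integrable_comp_emb
    (MeasurableEquiv.measurableEmbedding _)).2 h
  exact this.congr (Filter.Eventually.of_forall fun v => (pointwise_sq v).symm)

lemma gaussE2 (hD : 1 ≤ D) {a : ℝ} (ha : 0 < a) :
    (∫ v : EuclideanSpace ℝ (Fin D), ‖v‖ ^ 2 * Real.exp (-(a * ‖v‖ ^ 2)))
      = (π / a) ^ ((D : ℝ) / 2) * ((D : ℝ) / (2 * a)) := by
  have step1 : (∫ v : EuclideanSpace ℝ (Fin D), ‖v‖ ^ 2 * Real.exp (-(a * ‖v‖ ^ 2)))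
      = ∫ x : Fin D → ℝ, ∑ j, ∏ i, gfun a j i (x i) := by
    rw [← transfer (fun x => ∑ j, ∏ i, gfun a j i (x i))]
    exact integral_congr_ae (Filter.Eventually.of_forall fun v => pointwise_sq v)
  have hval : ∀ j : Fin D, (∫ x : Fin D → ℝ, ∏ i, gfun a j i (x i))
      = (Real.sqrt (π / a) / (2 * a)) * Real.sqrt (π / a) ^ (D - 1) := by
    intro j
    rw [volume_pi, integral_fintype_prod_eq_prod (gfun a j)]
    rw [Finset.prod_eq_mul_prod_sdiff_singleton_of_mem (Finset.mem_univ j)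
      (fun i => ∫ t, gfun a j i t)]
    have h1 : (∫ t, gfun a j j t) = Real.sqrt (π / a) / (2 * a) := by
      have he : gfun a j j = fun t => t ^ 2 * Real.exp (-a * t ^ 2) := by
        funext t; simp [gfun]
      rw [he, gauss1d ha]
    have h2 : ∀ i ∈ Finset.univ \ {j}, (∫ t, gfun a j i t) = Real.sqrt (π / a) := by
      intro i hi
      simp only [Finset.mem_sdiff, Finset.mem_singleton] at hi
      have he : gfun a j i = fun t => Real.exp (-a * t ^ 2) := by
        funext t; simp [gfun, hi.2]
      rw [he, integral_gaussian]
    rw [h1, Finset.prod_congr rfl h2, Finset.prod_const]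
    congr 2
    rw [Finset.card_sdiff_of_subset (by simp), Finset.card_singleton, Finset.card_univ, Fintype.card_fin]
  rw [step1, integral_finset_sum _ (fun j _ => pi_term_int ha j)]
  rw [Finset.sum_congr rfl (fun j _ => hval j), Finset.sum_const, Finset.card_univ,
    Fintype.card_fin, nsmul_eq_mul]
  have hsq : Real.sqrt (π / a) * Real.sqrt (π / a) ^ (D - 1) = (π / a) ^ ((D : ℝ) / 2) := by
    rw [← pow_succ', Nat.sub_add_cancel hD, Real.sqrt_eq_rpow,
      ← Real.rpow_natCast ((π / a) ^ (1/2 : ℝ)) D, ← Real.rpow_mul (by positivity)]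
    congr 1
    push_cast
    ring
  rw [← hsq]
  ring

lemma gaussE1_int {a : ℝ} (ha : 0 < a) :
    Integrable (fun v : EuclideanSpace ℝ (Fin D) => Real.exp (-(a * ‖v‖ ^ 2)) • v) := by
  apply Integrable.mono' ((gaussE0_int ha).add (gaussE2_int ha))
  · apply Continuous.aestronglyMeasurable
    exact (Real.continuous_exp.comp ((continuous_const.mul (continuous_norm.pow 2)).neg)).smul
      continuous_id
  · refine Filter.Eventually.of_forall fun v => ?_
    rw [norm_smul, Real.norm_eq_abs, abs_of_pos (Real.exp_pos _)]
    have h := Real.exp_pos (-(a * ‖v‖ ^ 2))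
    simp only [Pi.add_apply]
    nlinarith [norm_nonneg v, sq_nonneg (‖v‖ - 1)]

lemma gaussE1 {a : ℝ} :
    (∫ v : EuclideanSpace ℝ (Fin D), Real.exp (-(a * ‖v‖ ^ 2)) • v) = 0 := by
  have h := integral_neg_eq_self (fun v : EuclideanSpace ℝ (Fin D) =>
    Real.exp (-(a * ‖v‖ ^ 2)) • v) volume
  simp only [norm_neg, smul_neg, integral_neg] at h
  have h2 := congrArg (fun x => x + ∫ v : EuclideanSpace ℝ (Fin D),
    Real.exp (-(a * ‖v‖ ^ 2)) • v) h
  simp only [neg_add_cancel] at h2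
  have h3 : (2 : ℝ) • (∫ v : EuclideanSpace ℝ (Fin D), Real.exp (-(a * ‖v‖ ^ 2)) • v) = 0 := by
    rw [two_smul]; exact h2.symm
  simpa using (smul_eq_zero.mp h3).resolve_left (by norm_num)

lemma maxwellian_eq (m n T : ℝ) (u v : EuclideanSpace ℝ (Fin D)) :
    maxwellian D m n T u v
      = (n * (m / (2 * π * T)) ^ ((D : ℝ) / 2)) * Real.exp (-(m / (2 * T) * ‖v - u‖ ^ 2)) := by
  unfold maxwellian
  congr 2
  ring

lemma key_const {m n T : ℝ} (hm : 0 < m) (hT : 0 < T) :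
    (n * (m / (2 * π * T)) ^ ((D : ℝ) / 2)) * (π / (m / (2 * T))) ^ ((D : ℝ) / 2) = n := by
  have hπ := Real.pi_pos
  rw [mul_assoc, ← Real.mul_rpow (by positivity) (by positivity)]
  have : m / (2 * π * T) * (π / (m / (2 * T))) = 1 := by
    field_simp
  rw [this, Real.one_rpow, mul_one]

variable {m n T : ℝ} {u : EuclideanSpace ℝ (Fin D)}

lemma maxI0 (hm : 0 < m) (hT : 0 < T) (u : EuclideanSpace ℝ (Fin D)) : Integrable (maxwellian D m n T u) := by
  have ha : 0 < m / (2 * T) := by positivity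
  have base := gaussE0_int (D := D) ha
  have hshift : Integrable (fun v : EuclideanSpace ℝ (Fin D) =>
      Real.exp (-(m / (2 * T) * ‖v - u‖ ^ 2))) := by
    have hmp := measurePreserving_sub_right (volume : Measure (EuclideanSpace ℝ (Fin D))) u
    have := (hmp.integrable_comp base.aestronglyMeasurable).mpr base
    simpa [Function.comp_def] using this
  have := hshift.const_mul (n * (m / (2 * π * T)) ^ ((D : ℝ) / 2))
  exact this.congr (Filter.Eventually.of_forall fun v => (maxwellian_eq m n T u v).symm)

lemma max0 (hm : 0 < m) (hT : 0 < T) (u : EuclideanSpace ℝ (Fin D)) : (∫ v, maxwellian D m n T u v) = n := by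
  have ha : 0 < m / (2 * T) := by positivity
  simp_rw [maxwellian_eq m n T u]
  rw [integral_sub_right_eq_self (fun w : EuclideanSpace ℝ (Fin D) =>
    (n * (m / (2 * π * T)) ^ ((D : ℝ) / 2)) * Real.exp (-(m / (2 * T) * ‖w‖ ^ 2))) u]
  rw [integral_const_mul, gaussE0 ha, key_const hm hT]

lemma cent1_eq {a : ℝ} (u : EuclideanSpace ℝ (Fin D)) :
    (fun w : EuclideanSpace ℝ (Fin D) => Real.exp (-(a * ‖w‖ ^ 2)) • (w + u))
      = fun w => Real.exp (-(a * ‖w‖ ^ 2)) • w + Real.exp (-(a * ‖w‖ ^ 2)) • u := by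
  funext w; rw [smul_add]

lemma cent1_int {a : ℝ} (ha : 0 < a) (u : EuclideanSpace ℝ (Fin D)) :
    Integrable (fun w : EuclideanSpace ℝ (Fin D) => Real.exp (-(a * ‖w‖ ^ 2)) • (w + u)) := by
  rw [cent1_eq]
  exact (gaussE1_int ha).add ((gaussE0_int ha).smul_const u)

lemma cent1_val {a : ℝ} (ha : 0 < a) (u : EuclideanSpace ℝ (Fin D)) :
    (∫ w : EuclideanSpace ℝ (Fin D), Real.exp (-(a * ‖w‖ ^ 2)) • (w + u))
      = ((π / a) ^ ((D : ℝ) / 2)) • u := by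
  rw [cent1_eq, integral_add (gaussE1_int ha) ((gaussE0_int ha).smul_const u), gaussE1,
    integral_smul_const, gaussE0 ha, zero_add]

lemma cent2_eq {a : ℝ} (u : EuclideanSpace ℝ (Fin D)) :
    (fun w : EuclideanSpace ℝ (Fin D) => ‖w + u‖ ^ 2 * Real.exp (-(a * ‖w‖ ^ 2)))
      = fun w => ‖w‖ ^ 2 * Real.exp (-(a * ‖w‖ ^ 2))
          + (2 * (innerSL ℝ u) (Real.exp (-(a * ‖w‖ ^ 2)) • w)
            + ‖u‖ ^ 2 * Real.exp (-(a * ‖w‖ ^ 2))) := by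
  funext w
  simp only [innerSL_apply_apply, real_inner_smul_right]
  rw [norm_add_sq_real, real_inner_comm]
  ring

lemma cent2_int {a : ℝ} (ha : 0 < a) (u : EuclideanSpace ℝ (Fin D)) :
    Integrable (fun w : EuclideanSpace ℝ (Fin D) => ‖w + u‖ ^ 2 * Real.exp (-(a * ‖w‖ ^ 2))) := by
  rw [cent2_eq]
  exact (gaussE2_int ha).add
    ((((innerSL ℝ u).integrable_comp (gaussE1_int ha)).const_mul 2).add
      ((gaussE0_int ha).const_mul (‖u‖ ^ 2)))

lemma cent2_val (hD : 1 ≤ D) {a : ℝ} (ha : 0 < a) (u : EuclideanSpace ℝ (Fin D)) :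
    (∫ w : EuclideanSpace ℝ (Fin D), ‖w + u‖ ^ 2 * Real.exp (-(a * ‖w‖ ^ 2)))
      = (π / a) ^ ((D : ℝ) / 2) * ((D : ℝ) / (2 * a)) + ‖u‖ ^ 2 * (π / a) ^ ((D : ℝ) / 2) := by
  have h1 := gaussE2_int (D := D) ha
  have h2 : Integrable (fun w : EuclideanSpace ℝ (Fin D) =>
      2 * (innerSL ℝ u) (Real.exp (-(a * ‖w‖ ^ 2)) • w)) :=
    ((innerSL ℝ u).integrable_comp (gaussE1_int ha)).const_mul 2
  have h3 : Integrable (fun w : EuclideanSpace ℝ (Fin D) =>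
      ‖u‖ ^ 2 * Real.exp (-(a * ‖w‖ ^ 2))) := (gaussE0_int ha).const_mul (‖u‖ ^ 2)
  have h23 : Integrable (fun w : EuclideanSpace ℝ (Fin D) =>
      2 * (innerSL ℝ u) (Real.exp (-(a * ‖w‖ ^ 2)) • w)
        + ‖u‖ ^ 2 * Real.exp (-(a * ‖w‖ ^ 2))) := h2.add h3
  rw [cent2_eq, integral_add h1 h23, integral_add h2 h3, integral_const_mul, integral_const_mul,
    ContinuousLinearMap.integral_comp_comm _ (gaussE1_int ha), gaussE1, map_zero,
    gaussE2 hD ha, gaussE0 ha]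
  ring

lemma shift_fun_eq {c a : ℝ} (u : EuclideanSpace ℝ (Fin D)) :
    (fun v : EuclideanSpace ℝ (Fin D) => (c * Real.exp (-(a * ‖v - u‖ ^ 2))) • v)
      = fun v => (fun w : EuclideanSpace ℝ (Fin D) =>
          (c * Real.exp (-(a * ‖w‖ ^ 2))) • (w + u)) (v - u) := by
  funext v
  simp [sub_add_cancel]

lemma maxI1 (hm : 0 < m) (hT : 0 < T) (u : EuclideanSpace ℝ (Fin D)) :
    Integrable (fun v => maxwellian D m n T u v • v) := by
  have ha : 0 < m / (2 * T) := by positivity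
  set c := n * (m / (2 * π * T)) ^ ((D : ℝ) / 2) with hc
  have heq : (fun v => maxwellian D m n T u v • v)
      = fun v : EuclideanSpace ℝ (Fin D) =>
        (fun w : EuclideanSpace ℝ (Fin D) =>
          (c * Real.exp (-(m / (2 * T) * ‖w‖ ^ 2))) • (w + u)) (v - u) := by
    rw [← shift_fun_eq]
    funext v
    rw [maxwellian_eq]
  rw [heq]
  have base : Integrable (fun w : EuclideanSpace ℝ (Fin D) =>
      (c * Real.exp (-(m / (2 * T) * ‖w‖ ^ 2))) • (w + u)) := by
    have := (cent1_int ha u).smul c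
    refine this.congr (Filter.Eventually.of_forall fun w => ?_)
    simp [smul_smul]
  have hmp := measurePreserving_sub_right (volume : Measure (EuclideanSpace ℝ (Fin D))) u
  have := (hmp.integrable_comp base.aestronglyMeasurable).mpr base
  exact this

lemma max1 (hm : 0 < m) (hT : 0 < T) (u : EuclideanSpace ℝ (Fin D)) :
    (∫ v, maxwellian D m n T u v • v) = n • u := by
  have ha : 0 < m / (2 * T) := by positivity
  set c := n * (m / (2 * π * T)) ^ ((D : ℝ) / 2) with hc
  have heq : (fun v => maxwellian D m n T u v • v)
      = fun v : EuclideanSpace ℝ (Fin D) =>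
        (fun w : EuclideanSpace ℝ (Fin D) =>
          (c * Real.exp (-(m / (2 * T) * ‖w‖ ^ 2))) • (w + u)) (v - u) := by
    rw [← shift_fun_eq]
    funext v
    rw [maxwellian_eq]
  rw [heq, integral_sub_right_eq_self (fun w : EuclideanSpace ℝ (Fin D) =>
    (c * Real.exp (-(m / (2 * T) * ‖w‖ ^ 2))) • (w + u)) u]
  have h2 : (fun w : EuclideanSpace ℝ (Fin D) =>
      (c * Real.exp (-(m / (2 * T) * ‖w‖ ^ 2))) • (w + u))
      = fun w => c • (Real.exp (-(m / (2 * T) * ‖w‖ ^ 2)) • (w + u)) := by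
    funext w; rw [smul_smul]
  rw [h2, integral_smul, cent1_val ha u, smul_smul, hc, key_const hm hT]

lemma maxI2 (hm : 0 < m) (hT : 0 < T) (u : EuclideanSpace ℝ (Fin D)) :
    Integrable (fun v => ‖v‖ ^ 2 * maxwellian D m n T u v) := by
  have ha : 0 < m / (2 * T) := by positivity
  set c := n * (m / (2 * π * T)) ^ ((D : ℝ) / 2) with hc
  have heq : (fun v => ‖v‖ ^ 2 * maxwellian D m n T u v)
      = fun v : EuclideanSpace ℝ (Fin D) =>
        (fun w : EuclideanSpace ℝ (Fin D) =>
          c * (‖w + u‖ ^ 2 * Real.exp (-(m / (2 * T) * ‖w‖ ^ 2)))) (v - u) := by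
    funext v
    rw [maxwellian_eq]
    simp only [sub_add_cancel]
    ring
  rw [heq]
  have base := (cent2_int (D := D) ha u).const_mul c
  have hmp := measurePreserving_sub_right (volume : Measure (EuclideanSpace ℝ (Fin D))) u
  have := (hmp.integrable_comp base.aestronglyMeasurable).mpr base
  exact this

lemma max2 (hD : 1 ≤ D) (hm : 0 < m) (hT : 0 < T) (u : EuclideanSpace ℝ (Fin D)) :
    (∫ v, ‖v‖ ^ 2 * maxwellian D m n T u v)
      = n * ‖u‖ ^ 2 + (D : ℝ) * n * T / m := by
  have ha : 0 < m / (2 * T) := by positivity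
  set c := n * (m / (2 * π * T)) ^ ((D : ℝ) / 2) with hc
  have heq : (fun v => ‖v‖ ^ 2 * maxwellian D m n T u v)
      = fun v : EuclideanSpace ℝ (Fin D) =>
        (fun w : EuclideanSpace ℝ (Fin D) =>
          c * (‖w + u‖ ^ 2 * Real.exp (-(m / (2 * T) * ‖w‖ ^ 2)))) (v - u) := by
    funext v
    rw [maxwellian_eq]
    simp only [sub_add_cancel]
    ring
  rw [heq, integral_sub_right_eq_self (fun w : EuclideanSpace ℝ (Fin D) =>
    c * (‖w + u‖ ^ 2 * Real.exp (-(m / (2 * T) * ‖w‖ ^ 2)))) u,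
    integral_const_mul, cent2_val hD ha u]
  have hkey := key_const (D := D) (n := n) hm hT
  have hm' : m ≠ 0 := ne_of_gt hm
  have hT' : T ≠ 0 := ne_of_gt hT
  -- c * ((π/a)^{D/2} * (D/(2a)) + ‖u‖² * (π/a)^{D/2}) = n * ‖u‖² + D n T / m
  have e1 : c * ((π / (m / (2 * T))) ^ ((D : ℝ) / 2)) = n := by
    rw [hc]; exact hkey
  calc c * ((π / (m / (2 * T))) ^ ((D : ℝ) / 2) * ((D : ℝ) / (2 * (m / (2 * T))))
        + ‖u‖ ^ 2 * (π / (m / (2 * T))) ^ ((D : ℝ) / 2))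
      = (c * (π / (m / (2 * T))) ^ ((D : ℝ) / 2)) * ((D : ℝ) / (2 * (m / (2 * T))))
        + ‖u‖ ^ 2 * (c * (π / (m / (2 * T))) ^ ((D : ℝ) / 2)) := by ring
    _ = n * ((D : ℝ) / (2 * (m / (2 * T)))) + ‖u‖ ^ 2 * n := by rw [e1]
    _ = n * ‖u‖ ^ 2 + (D : ℝ) * n * T / m := by field_simp; ring

lemma f_energy {D : ℕ} {m n T : ℝ} {f : EuclideanSpace ℝ (Fin D) → ℝ}
    {vb : EuclideanSpace ℝ (Fin D)} (hm : 0 < m)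
    (hf_int : Integrable f) (hf_mom : Integrable (fun v => f v • v))
    (hf_en : Integrable (fun v => ‖v‖ ^ 2 * f v))
    (hn_def : n = ∫ v, f v) (hvb : n • vb = ∫ v, f v • v)
    (hT_def : (D : ℝ) / 2 * n * T = ∫ v, m / 2 * ‖v - vb‖ ^ 2 * f v) :
    (∫ v, ‖v‖ ^ 2 * f v) = n * ‖vb‖ ^ 2 + (D : ℝ) * n * T / m := by
  have hA : Integrable (fun v : EuclideanSpace ℝ (Fin D) => m / 2 * (‖v‖ ^ 2 * f v)) :=
    hf_en.const_mul _
  have hB : Integrable (fun v : EuclideanSpace ℝ (Fin D) =>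
      m * ((innerSL ℝ vb) (f v • v))) := ((innerSL ℝ vb).integrable_comp hf_mom).const_mul m
  have hC : Integrable (fun v : EuclideanSpace ℝ (Fin D) => m / 2 * ‖vb‖ ^ 2 * f v) :=
    hf_int.const_mul _
  have heq : (fun v : EuclideanSpace ℝ (Fin D) => m / 2 * ‖v - vb‖ ^ 2 * f v)
      = fun v => m / 2 * (‖v‖ ^ 2 * f v) - m * ((innerSL ℝ vb) (f v • v))
          + m / 2 * ‖vb‖ ^ 2 * f v := by
    funext v
    simp only [innerSL_apply_apply, real_inner_smul_right]
    rw [norm_sub_sq_real, real_inner_comm]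
    ring
  have key : ((D : ℝ) / 2 * n * T)
      = m / 2 * (∫ v, ‖v‖ ^ 2 * f v) - m * (n * ‖vb‖ ^ 2) + m / 2 * ‖vb‖ ^ 2 * n := by
    rw [hT_def]
    rw [show (fun v : EuclideanSpace ℝ (Fin D) => m / 2 * ‖v - vb‖ ^ 2 * f v)
      = _ from heq]
    have hAB : Integrable (fun v : EuclideanSpace ℝ (Fin D) =>
        m / 2 * (‖v‖ ^ 2 * f v) - m * ((innerSL ℝ vb) (f v • v))) := hA.sub hB
    rw [integral_add hAB hC, integral_sub hA hB, integral_const_mul, integral_const_mul,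
      integral_const_mul, ContinuousLinearMap.integral_comp_comm _ hf_mom, ← hvb, ← hn_def]
    simp only [innerSL_apply_apply, real_inner_smul_right, real_inner_self_eq_norm_sq]
  have hm' : m ≠ 0 := ne_of_gt hm
  field_simp at key ⊢
  linarith

lemma double_sum_cancel {M : Type*} [AddCommGroup M] [Module ℝ M] {P : ℕ}
    (A : Fin P → Fin P → M) (h : ∀ p q, A p q + A q p = 0) :
    (∑ p, ∑ q, A p q) = 0 := by
  have h1 : (∑ p, ∑ q, A p q) + (∑ p, ∑ q, A q p) = 0 := by
    rw [← Finset.sum_add_distrib]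
    simp_rw [← Finset.sum_add_distrib]
    simp [h]
  have h2 : (∑ p : Fin P, ∑ q : Fin P, A q p) = ∑ p, ∑ q, A p q := Finset.sum_comm
  rw [h2] at h1
  have h3 : (2 : ℝ) • (∑ p : Fin P, ∑ q : Fin P, A p q) = 0 := by rw [two_smul]; exact h1
  simpa using (smul_eq_zero.mp h3).resolve_left (two_ne_zero)

/-- The multispecies BGK model `Q^BGK_p = ∑_q ν_{p,q}(M_{p,q} − f_p)`, with mixture
velocities and temperatures given by the weighted-average formulas, conserves
total momentum and total kinetic energy. -/
theorem multispecies_bgk_conservation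
    (D : ℕ) (hD : 1 ≤ D) (P : ℕ) (hP : 1 ≤ P)
    (m : Fin P → ℝ) (hm : ∀ p, 0 < m p)
    (f : Fin P → EuclideanSpace ℝ (Fin D) → ℝ)
    (hf_nonneg : ∀ p v, 0 ≤ f p v)
    (hf_int : ∀ p, Integrable (f p))
    (hf_mom : ∀ p, Integrable (fun v => f p v • v))
    (hf_en : ∀ p, Integrable (fun v => ‖v‖ ^ 2 * f p v))
    (n : Fin P → ℝ) (hn_def : ∀ p, n p = ∫ v, f p v) (hn : ∀ p, 0 < n p)
    (vb : Fin P → EuclideanSpace ℝ (Fin D))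
    (hvb : ∀ p, n p • vb p = ∫ v, f p v • v)
    (T : Fin P → ℝ) (hT : ∀ p, 0 < T p)
    (hT_def : ∀ p, (D : ℝ) / 2 * n p * T p = ∫ v, m p / 2 * ‖v - vb p‖ ^ 2 * f p v)
    (ν : Fin P → Fin P → ℝ) (hν : ∀ p q, 0 < ν p q)
    (ρ : Fin P → ℝ) (hρ : ∀ p, ρ p = m p * n p)
    (u : Fin P → Fin P → EuclideanSpace ℝ (Fin D))
    (hu : ∀ p q, u p q = (ρ p * ν p q + ρ q * ν q p)⁻¹ •
      ((ρ p * ν p q) • vb p + (ρ q * ν q p) • vb q))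
    (Tm : Fin P → Fin P → ℝ)
    (hTm : ∀ p q, Tm p q =
      (n p * ν p q * T p + n q * ν q p * T q) / (n p * ν p q + n q * ν q p)
      + (ρ p * ν p q * (‖vb p‖ ^ 2 - ‖u p q‖ ^ 2)
          + ρ q * ν q p * (‖vb q‖ ^ 2 - ‖u q p‖ ^ 2))
        / ((D : ℝ) * (n p * ν p q + n q * ν q p)))
    (hTm_pos : ∀ p q, 0 < Tm p q) :
    (∑ p, ∫ v, (m p * ∑ q, ν p q * (maxwellian D (m p) (n p) (Tm p q) (u p q) v - f p v)) • v)
      = 0 ∧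
    (∑ p, ∫ v, m p / 2 * ‖v‖ ^ 2
        * ∑ q, ν p q * (maxwellian D (m p) (n p) (Tm p q) (u p q) v - f p v))
      = 0 := by
  have hDpos : (0:ℝ) < (D:ℝ) := by exact_mod_cast hD
  have husym : ∀ p q, u q p = u p q := by
    intro p q
    rw [hu q p, hu p q, add_comm (ρ q * ν q p) (ρ p * ν p q),
      add_comm ((ρ q * ν q p) • vb q) ((ρ p * ν p q) • vb p)]
  -- momentum: per-species integral
  have hmom_p : ∀ p, (∫ v, (m p * ∑ q, ν p q
        * (maxwellian D (m p) (n p) (Tm p q) (u p q) v - f p v)) • v)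
      = ∑ q, (m p * ν p q) • ((n p) • u p q - (n p) • vb p) := by
    intro p
    have hint : ∀ q : Fin P, Integrable (fun v : EuclideanSpace ℝ (Fin D) =>
        (maxwellian D (m p) (n p) (Tm p q) (u p q) v) • v - (f p v) • v) :=
      fun q => (maxI1 (hm p) (hTm_pos p q) (u p q)).sub (hf_mom p)
    have hpt : (fun v : EuclideanSpace ℝ (Fin D) => (m p * ∑ q, ν p q
          * (maxwellian D (m p) (n p) (Tm p q) (u p q) v - f p v)) • v)
        = fun v => ∑ q, (m p * ν p q)
            • ((maxwellian D (m p) (n p) (Tm p q) (u p q) v) • v - (f p v) • v) := by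
      funext v
      rw [Finset.mul_sum, Finset.sum_smul]
      refine Finset.sum_congr rfl fun q _ => ?_
      rw [smul_sub, smul_smul, smul_smul, ← sub_smul]
      congr 1
      ring
    rw [hpt, integral_finset_sum _ (fun q _ => by exact (hint q).smul (m p * ν p q))]
    refine Finset.sum_congr rfl fun q _ => ?_
    rw [integral_smul, integral_sub (maxI1 (hm p) (hTm_pos p q) (u p q)) (hf_mom p),
      max1 (hm p) (hTm_pos p q) (u p q), ← hvb p]
  -- momentum: pairwise cancellation
  have hApair : ∀ p q : Fin P, (m p * ν p q) • ((n p) • u p q - (n p) • vb p)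
      + (m q * ν q p) • ((n q) • u q p - (n q) • vb q) = 0 := by
    intro p q
    have hd : 0 < ρ p * ν p q + ρ q * ν q p := by
      rw [hρ p, hρ q]
      have := hm p; have := hm q; have := hn p; have := hn q
      have := hν p q; have := hν q p
      positivity
    have hid : (ρ p * ν p q + ρ q * ν q p) • u p q
        = (ρ p * ν p q) • vb p + (ρ q * ν q p) • vb q := by
      rw [hu p q, smul_smul, mul_inv_cancel₀ (ne_of_gt hd), one_smul]
    rw [hρ p, hρ q] at hid
    rw [husym p q]
    linear_combination (norm := module) hid
  -- energy: per-species integral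
  have hen_p : ∀ p, (∫ v, m p / 2 * ‖v‖ ^ 2 * ∑ q, ν p q
        * (maxwellian D (m p) (n p) (Tm p q) (u p q) v - f p v))
      = ∑ q, (m p / 2 * ν p q) * ((n p * ‖u p q‖ ^ 2 + (D:ℝ) * n p * Tm p q / m p)
          - (n p * ‖vb p‖ ^ 2 + (D:ℝ) * n p * T p / m p)) := by
    intro p
    have hint : ∀ q : Fin P, Integrable (fun v : EuclideanSpace ℝ (Fin D) =>
        ‖v‖ ^ 2 * maxwellian D (m p) (n p) (Tm p q) (u p q) v - ‖v‖ ^ 2 * f p v) :=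
      fun q => (maxI2 (hm p) (hTm_pos p q) (u p q)).sub (hf_en p)
    have hpt : (fun v : EuclideanSpace ℝ (Fin D) => m p / 2 * ‖v‖ ^ 2 * ∑ q, ν p q
          * (maxwellian D (m p) (n p) (Tm p q) (u p q) v - f p v))
        = fun v => ∑ q, (m p / 2 * ν p q)
            * (‖v‖ ^ 2 * maxwellian D (m p) (n p) (Tm p q) (u p q) v - ‖v‖ ^ 2 * f p v) := by
      funext v
      rw [Finset.mul_sum]
      refine Finset.sum_congr rfl fun q _ => ?_
      ring
    rw [hpt, integral_finset_sum _ (fun q _ => by exact (hint q).const_mul (m p / 2 * ν p q))]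
    refine Finset.sum_congr rfl fun q _ => ?_
    rw [integral_const_mul, integral_sub (maxI2 (hm p) (hTm_pos p q) (u p q)) (hf_en p),
      max2 hD (hm p) (hTm_pos p q) (u p q),
      f_energy (hm p) (hf_int p) (hf_mom p) (hf_en p) (hn_def p) (hvb p) (hT_def p)]
  -- energy: pairwise cancellation
  have hBpair : ∀ p q : Fin P, (m p / 2 * ν p q) * ((n p * ‖u p q‖ ^ 2 + (D:ℝ) * n p * Tm p q / m p)
        - (n p * ‖vb p‖ ^ 2 + (D:ℝ) * n p * T p / m p))
      + (m q / 2 * ν q p) * ((n q * ‖u q p‖ ^ 2 + (D:ℝ) * n q * Tm q p / m q)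
        - (n q * ‖vb q‖ ^ 2 + (D:ℝ) * n q * T q / m q)) = 0 := by
    intro p q
    have hden : (0:ℝ) < n p * ν p q + n q * ν q p := by
      have := hn p; have := hn q; have := hν p q; have := hν q p
      positivity
    have hden' : (0:ℝ) < n q * ν q p + n p * ν p q := by linarith
    have h1 : n p * ν p q + n q * ν q p ≠ 0 := ne_of_gt hden
    have h1' : n q * ν q p + n p * ν p q ≠ 0 := ne_of_gt hden'
    have h2 : (D:ℝ) ≠ 0 := ne_of_gt hDpos
    have h3 : m p ≠ 0 := ne_of_gt (hm p)
    have h4 : m q ≠ 0 := ne_of_gt (hm q)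
    rw [hTm p q, hTm q p, husym p q, hρ p, hρ q]
    rw [add_comm (n q * ν q p) (n p * ν p q)]
    generalize hS : n p * ν p q + n q * ν q p = S at h1 ⊢
    field_simp
    rw [← hS]
    ring
  constructor
  · rw [Finset.sum_congr rfl (fun p _ => hmom_p p)]
    exact double_sum_cancel _ hApair
  · rw [Finset.sum_congr rfl (fun p _ => hen_p p)]
    exact double_sum_cancel _ hBpair
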